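/- arXiv:1111.6984 — 2 statements merged into one kernel-verified Lean document; each statement's English description precedes it below -/
import Mathlib

section
/- Every element of finite order in the group of formally invertible power series maps of ℂⁿ without constant term is formally conjugate, by a map tangent to the identity, to its linear part. -/
noncomputable section

def compP (f g : PowerSeries ℂ) : PowerSeries ℂ :=
  PowerSeries.mk fun n =>
    ∑ j ∈ Finset.range (n + 1), PowerSeries.coeff j f * PowerSeries.coeff n (g ^ j)

def iterP (g : PowerSeries ℂ) : ℕ → PowerSeries ℂ
  | 0 => PowerSeries.X
  | m + 1 => compP g (iterP g m)

abbrev FormalMap (n : ℕ) := Fin n → MvPowerSeries (Fin n) ℂ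

def degreeOf {n : ℕ} (d : Fin n →₀ ℕ) : ℕ := d.sum fun _ m => m

def substM {n : ℕ} (G : FormalMap n) (f : MvPowerSeries (Fin n) ℂ) :
    MvPowerSeries (Fin n) ℂ :=
  fun d =>
    ∑ e ∈ Finset.Iic (Finsupp.equivFunOnFinite.symm fun _ => degreeOf d),
      MvPowerSeries.coeff e f * MvPowerSeries.coeff d (∏ i, G i ^ e i)

def compM {n : ℕ} (F G : FormalMap n) : FormalMap n := fun i => substM G (F i)

def idM (n : ℕ) : FormalMap n := fun i => MvPowerSeries.X i

def iterM {n : ℕ} (F : FormalMap n) : ℕ → FormalMap n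
  | 0 => idM n
  | m + 1 => compM F (iterM F m)

def linMatrix {n : ℕ} (F : FormalMap n) : Matrix (Fin n) (Fin n) ℂ :=
  fun i j => MvPowerSeries.coeff (Finsupp.single j 1) (F i)

def linMap {n : ℕ} (F : FormalMap n) : FormalMap n :=
  fun i => ∑ j, MvPowerSeries.C (linMatrix F i j) * MvPowerSeries.X j

def substPM (q : MvPowerSeries (Fin 2) ℂ) (φ : PowerSeries ℂ) : MvPowerSeries (Fin 2) ℂ :=
  fun d =>
    ∑ j ∈ Finset.range (degreeOf d + 1),
      PowerSeries.coeff j φ * MvPowerSeries.coeff d (q ^ j)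

def pXY : MvPowerSeries (Fin 2) ℂ := MvPowerSeries.X 0 * MvPowerSeries.X 1

def Mmap (φ ψ : PowerSeries ℂ) : FormalMap 2 :=
  ![MvPowerSeries.X 0 * substPM pXY φ, MvPowerSeries.X 1 * substPM pXY ψ]

/-! Cartan's averaging trick. If `F^k = id` and `A = L(F)`, then `A^k = 1`, and
`H = (1/k) ∑_{m < k} A⁻ᵐ ∘ Fᵐ` is tangent to the identity and satisfies `H ∘ F = A ∘ H`:
composing with `F` on the right and with `A` on the left both shift the terms of the
average by one. A map tangent to the identity is invertible (its inverse is the fixed point of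
`K ↦ X - (H - X) ∘ K`, a contraction for the order since `H - X` has order at least two), and
`H⁻¹` conjugates `F` to `A`. -/

namespace MvPowerSeries

variable {σ τ R : Type*} [CommRing R]

theorem le_order_mul_sub_mul (a b A B : MvPowerSeries σ R) :
    min ((a - b).order + A.order) (b.order + (A - B).order) ≤ (a * A - b * B).order := by
  have h : a * A - b * B = (a - b) * A + b * (A - B) := by ring
  rw [h]
  exact (min_le_min le_order_mul le_order_mul).trans min_order_le_add

theorem card_le_order_prod {ι : Type*} (s : Finset ι) (a : ι → MvPowerSeries σ R)
    (ha : ∀ i ∈ s, constantCoeff (a i) = 0) : (s.card : ℕ∞) ≤ (∏ i ∈ s, a i).order := by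
  calc (s.card : ℕ∞) = ∑ _ ∈ s, 1 := by simp
    _ ≤ ∑ i ∈ s, (a i).order :=
      Finset.sum_le_sum fun i hi => one_le_order_iff_constCoeff_eq_zero.mpr (ha i hi)
    _ ≤ _ := le_order_prod a s

theorem le_order_prod_sub_prod_add_one {ι : Type*} (s : Finset ι) (a b : ι → MvPowerSeries σ R)
    {D : ℕ∞} (ha : ∀ i ∈ s, constantCoeff (a i) = 0) (hb : ∀ i ∈ s, constantCoeff (b i) = 0)
    (hab : ∀ i ∈ s, D ≤ (a i - b i).order) :
    D + s.card ≤ (∏ i ∈ s, a i - ∏ i ∈ s, b i).order + 1 := by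
  classical
  induction s using Finset.induction with
  | empty => simp
  | insert j s hj ih =>
    simp only [Finset.forall_mem_insert] at ha hb hab
    obtain ⟨-, ha⟩ := ha
    obtain ⟨hbj, hb⟩ := hb
    obtain ⟨habj, hab⟩ := hab
    replace hbj := one_le_order_iff_constCoeff_eq_zero.mpr hbj
    have hprod := card_le_order_prod s a ha
    specialize ih ha hb hab
    rw [Finset.prod_insert hj, Finset.prod_insert hj, Finset.card_insert_of_notMem hj]
    calc D + ↑(s.card + 1)
        ≤ min ((a j - b j).order + (∏ i ∈ s, a i).order)
            ((b j).order + (∏ i ∈ s, a i - ∏ i ∈ s, b i).order) + 1 := by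
          rw [← min_add_add_right]
          refine le_min ?_ ?_
          · push_cast
            rw [← add_assoc]
            gcongr
          · calc D + ↑(s.card + 1) = (D + s.card) + 1 := by push_cast; ring
              _ ≤ ((∏ i ∈ s, a i - ∏ i ∈ s, b i).order + 1) + (b j).order := by gcongr
              _ = _ := by ring
      _ ≤ _ := by gcongr; exact le_order_mul_sub_mul _ _ _ _

theorem prod_pow_eq_prod_sigma (a : σ → MvPowerSeries τ R) (e : σ →₀ ℕ) :
    (e.prod fun i m => a i ^ m) = ∏ x ∈ e.support.sigma fun i => Finset.range (e i), a x.1 := by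
  simp [Finset.prod_sigma, Finsupp.prod]

theorem card_sigma_range_eq_degree (e : σ →₀ ℕ) :
    (e.support.sigma fun i => Finset.range (e i)).card = e.degree := by
  simp [Finset.card_sigma, Finsupp.degree_apply]

theorem degree_le_order_prod_pow {a : σ → MvPowerSeries τ R}
    (ha : ∀ i, constantCoeff (a i) = 0) (e : σ →₀ ℕ) :
    (e.degree : ℕ∞) ≤ (e.prod fun i m => a i ^ m).order := by
  rw [prod_pow_eq_prod_sigma, ← card_sigma_range_eq_degree]
  exact card_le_order_prod _ _ fun x _ => ha x.1

theorem le_order_prod_pow_sub_prod_pow_add_one {a b : σ → MvPowerSeries τ R}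
    (ha : ∀ i, constantCoeff (a i) = 0) (hb : ∀ i, constantCoeff (b i) = 0) {D : ℕ∞}
    (hab : ∀ i, D ≤ (a i - b i).order) (e : σ →₀ ℕ) :
    D + e.degree ≤ ((e.prod fun i m => a i ^ m) - e.prod fun i m => b i ^ m).order + 1 := by
  rw [prod_pow_eq_prod_sigma, prod_pow_eq_prod_sigma, ← card_sigma_range_eq_degree]
  exact le_order_prod_sub_prod_add_one _ _ _ (fun x _ => ha x.1) (fun x _ => hb x.1)
    fun x _ => hab x.1

theorem le_order_subst_sub_subst [Finite σ] {a b : σ → MvPowerSeries τ R}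
    (ha : ∀ i, constantCoeff (a i) = 0) (hb : ∀ i, constantCoeff (b i) = 0) {D : ℕ∞}
    (hab : ∀ i, D ≤ (a i - b i).order) {f : MvPowerSeries σ R} (hf : 2 ≤ f.order) :
    D + 1 ≤ (subst a f - subst b f).order := by
  refine le_order fun d hd => ?_
  rw [map_sub, coeff_subst (hasSubst_of_constantCoeff_zero ha),
    coeff_subst (hasSubst_of_constantCoeff_zero hb), sub_eq_zero]
  refine finsum_congr fun e => ?_
  by_cases hfe : coeff e f = 0
  · simp [hfe]
  have he : (2 : ℕ∞) ≤ e.degree := hf.trans (order_le hfe)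
  have key := le_order_prod_pow_sub_prod_pow_add_one ha hb hab e
  congr 1
  rw [← sub_eq_zero, ← map_sub]
  apply coeff_of_lt_order
  refine hd.trans_le ?_
  rw [← ENat.add_le_add_iff_right ENat.one_ne_top, add_assoc]
  exact (add_le_add_right he D).trans key

theorem order_sub_comm (f g : MvPowerSeries σ R) : (f - g).order = (g - f).order := by
  rw [← neg_sub, order_neg]

theorem eq_zero_of_forall_natCast_le_order {f : MvPowerSeries σ R}
    (hf : ∀ s : ℕ, (s : ℕ∞) ≤ f.order) : f = 0 := by
  ext d
  exact coeff_of_lt_order ((Nat.cast_lt.mpr (Nat.lt_succ_self _)).trans_le (hf _))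

theorem natCast_le_order_sub_of_le {f : ℕ → MvPowerSeries σ R}
    (hf : ∀ s : ℕ, (s : ℕ∞) ≤ (f (s + 1) - f s).order) {s t : ℕ} (hst : s ≤ t) :
    (s : ℕ∞) ≤ (f t - f s).order := by
  induction t, hst using Nat.le_induction with
  | base => simp
  | succ t hst ih =>
    rw [← sub_add_sub_cancel]
    exact le_trans (le_min ((Nat.cast_le.mpr hst).trans (hf t)) ih) min_order_le_add

theorem exists_natCast_le_order_sub {f : ℕ → MvPowerSeries σ R}
    (hf : ∀ s : ℕ, (s : ℕ∞) ≤ (f (s + 1) - f s).order) :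
    ∃ g : MvPowerSeries σ R, ∀ s : ℕ, (s : ℕ∞) ≤ (g - f s).order := by
  let g : MvPowerSeries σ R := fun d => coeff d (f (d.degree + 1))
  refine ⟨g, fun s => le_order fun d hd => ?_⟩
  have hds : d.degree + 1 ≤ s := by exact_mod_cast Order.add_one_le_of_lt hd
  change coeff d (f (d.degree + 1)) - coeff d (f s) = 0
  rw [← neg_sub, ← map_sub, neg_eq_zero]
  exact coeff_of_lt_order ((Nat.cast_lt.mpr (Nat.lt_succ_self _)).trans_le
    (natCast_le_order_sub_of_le hf hds))

end MvPowerSeries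

theorem Finset.sum_range_succ_eq_sum_range {M : Type*} [AddCancelCommMonoid M] (f : ℕ → M)
    {k : ℕ} (h : f k = f 0) : ∑ m ∈ range k, f (m + 1) = ∑ m ∈ range k, f m :=
  add_right_cancel (b := f 0) (by rw [← sum_range_succ', sum_range_succ, h])

section FormalMap

open MvPowerSeries

variable {n : ℕ}

theorem substM_eq_subst {G : FormalMap n} (hG : ∀ i, constantCoeff (G i) = 0)
    (f : MvPowerSeries (Fin n) ℂ) : substM G f = subst G f := by
  ext d
  rw [coeff_subst (hasSubst_of_constantCoeff_zero hG),
    finsum_eq_sum_of_support_subset (s := Finset.Iic (Finsupp.equivFunOnFinite.symm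
      fun _ => degreeOf d)) _ fun e he => ?_]
  · refine Finset.sum_congr rfl fun e _ => ?_
    rw [smul_eq_mul, Finsupp.prod_fintype _ _ (by simp)]
  refine Finset.mem_coe.mpr (Finset.mem_Iic.mpr fun i => not_lt.mp fun hi => he ?_)
  dsimp only
  rw [coeff_of_lt_order ((Nat.cast_lt.mpr ?_).trans_le (degree_le_order_prod_pow hG e)), smul_zero]
  exact hi.trans_le (Finsupp.le_degree i e)

theorem compM_eq_subst (F : FormalMap n) {G : FormalMap n} (hG : ∀ i, constantCoeff (G i) = 0) :
    compM F G = fun i => subst G (F i) :=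
  funext fun i => substM_eq_subst hG (F i)

theorem constantCoeff_compM {F G : FormalMap n} (hF : ∀ i, constantCoeff (F i) = 0)
    (hG : ∀ i, constantCoeff (G i) = 0) (i : Fin n) : constantCoeff (compM F G i) = 0 := by
  rw [compM_eq_subst F hG]
  exact constantCoeff_subst_eq_zero (hasSubst_of_constantCoeff_zero hG) hG (hF i)

theorem compM_assoc (F : FormalMap n) {G H : FormalMap n} (hG : ∀ i, constantCoeff (G i) = 0)
    (hH : ∀ i, constantCoeff (H i) = 0) : compM (compM F G) H = compM F (compM G H) := by
  rw [compM_eq_subst _ hH, compM_eq_subst _ (constantCoeff_compM hG hH), compM_eq_subst F hG,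
    compM_eq_subst G hH]
  funext i
  exact subst_comp_subst_apply (hasSubst_of_constantCoeff_zero hG)
    (hasSubst_of_constantCoeff_zero hH) (F i)

theorem compM_idM (F : FormalMap n) : compM F (idM n) = F := by
  rw [compM_eq_subst F (G := idM n) constantCoeff_X]
  exact funext fun i => congrFun subst_self (F i)

theorem idM_compM {F : FormalMap n} (hF : ∀ i, constantCoeff (F i) = 0) : compM (idM n) F = F := by
  rw [compM_eq_subst _ hF]
  exact funext fun i => subst_X (hasSubst_of_constantCoeff_zero hF) i

theorem coeff_single_one_subst {G : FormalMap n} (hG : ∀ i, constantCoeff (G i) = 0)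
    (f : MvPowerSeries (Fin n) ℂ) (j : Fin n) :
    coeff (Finsupp.single j 1) (subst G f) =
      ∑ l, coeff (Finsupp.single l 1) f * coeff (Finsupp.single j 1) (G l) := by
  let single₁ : Fin n ↪ (Fin n →₀ ℕ) := ⟨fun l => Finsupp.single l 1,
    Finsupp.single_left_injective one_ne_zero⟩
  rw [coeff_subst (hasSubst_of_constantCoeff_zero hG),
    finsum_eq_sum_of_support_subset (s := Finset.univ.map single₁), Finset.sum_map]
  · refine Finset.sum_congr rfl fun l _ => ?_
    simp [single₁, Finsupp.prod_single_index]
  intro e he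
  have hcoeff : coeff (Finsupp.single j 1) (e.prod fun i m => G i ^ m) ≠ 0 :=
    right_ne_zero_of_smul he
  have hle : e.degree ≤ 1 := by
    have := (degree_le_order_prod_pow hG e).trans (order_le hcoeff)
    simpa using this
  have hne : e ≠ 0 := by
    rintro rfl
    simp [coeff_one] at hcoeff
  obtain ⟨l, rfl⟩ : e ∈ Set.range fun l => Finsupp.single l 1 := by
    rw [Finsupp.range_single_one]
    exact le_antisymm hle (Nat.one_le_iff_ne_zero.mpr ((Finsupp.degree_eq_zero_iff e).not.mpr hne))
  simp [single₁]

theorem linMatrix_compM (F : FormalMap n) {G : FormalMap n} (hG : ∀ i, constantCoeff (G i) = 0) :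
    linMatrix (compM F G) = linMatrix F * linMatrix G := by
  ext i j
  rw [compM_eq_subst F hG, Matrix.mul_apply]
  exact coeff_single_one_subst hG (F i) j

theorem linMatrix_idM : linMatrix (idM n) = 1 := by
  ext i j
  simp [linMatrix, idM, coeff_X, Matrix.one_apply, Finsupp.single_left_inj one_ne_zero, eq_comm]

theorem smul_sum_compM {ι : Type*} (c : ℂ) (s : Finset ι) (G : ι → FormalMap n)
    {F : FormalMap n} (hF : ∀ i, constantCoeff (F i) = 0) :
    compM (c • ∑ m ∈ s, G m) F = c • ∑ m ∈ s, compM (G m) F := by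
  simp only [compM_eq_subst _ hF, Pi.smul_apply, Finset.sum_apply,
    ← coe_substAlgHom (hasSubst_of_constantCoeff_zero hF), map_smul, map_sum]
  ext i : 1
  simp [Finset.sum_apply]

theorem linMatrix_smul_sum {ι : Type*} (c : ℂ) (s : Finset ι) (G : ι → FormalMap n) :
    linMatrix (c • ∑ m ∈ s, G m) = c • ∑ m ∈ s, linMatrix (G m) := by
  ext i j
  simp [linMatrix, Finset.sum_apply, Matrix.sum_apply]

theorem constantCoeff_smul_sum {ι : Type*} (c : ℂ) (s : Finset ι) {G : ι → FormalMap n}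
    (hG : ∀ m, ∀ i, constantCoeff (G m i) = 0) (i : Fin n) :
    constantCoeff ((c • ∑ m ∈ s, G m) i) = 0 := by
  simp [Finset.sum_apply, hG]

theorem constantCoeff_iterM {F : FormalMap n} (hF : ∀ i, constantCoeff (F i) = 0) (m : ℕ)
    (i : Fin n) : constantCoeff (iterM F m i) = 0 := by
  induction m generalizing i with
  | zero => exact constantCoeff_X i
  | succ m ih => exact constantCoeff_compM hF ih i

theorem iterM_succ' {F : FormalMap n} (hF : ∀ i, constantCoeff (F i) = 0) (m : ℕ) :
    iterM F (m + 1) = compM (iterM F m) F := by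
  induction m with
  | zero => exact (compM_idM F).trans (idM_compM hF).symm
  | succ m ih =>
    change compM F (iterM F (m + 1)) = compM (compM F (iterM F m)) F
    rw [ih, compM_assoc F (constantCoeff_iterM hF m) hF]

theorem linMatrix_iterM {F : FormalMap n} (hF : ∀ i, constantCoeff (F i) = 0) (m : ℕ) :
    linMatrix (iterM F m) = linMatrix F ^ m := by
  induction m with
  | zero => exact linMatrix_idM
  | succ m ih => rw [iterM_succ' hF, linMatrix_compM _ hF, ih, pow_succ]

end FormalMap

namespace Matrix

open MvPowerSeries

variable {n : ℕ}

def toFormalMap (M : Matrix (Fin n) (Fin n) ℂ) : FormalMap n :=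
  fun i => ∑ j, C (M i j) * X j

theorem constantCoeff_toFormalMap (M : Matrix (Fin n) (Fin n) ℂ) (i : Fin n) :
    constantCoeff (M.toFormalMap i) = 0 := by
  simp [toFormalMap]

theorem linMatrix_toFormalMap (M : Matrix (Fin n) (Fin n) ℂ) : linMatrix M.toFormalMap = M := by
  ext i j
  simp [linMatrix, toFormalMap, coeff_X, Finsupp.single_left_inj one_ne_zero]

theorem toFormalMap_one : (1 : Matrix (Fin n) (Fin n) ℂ).toFormalMap = idM n := by
  ext i : 1
  simp [toFormalMap, idM, Matrix.one_apply]

theorem toFormalMap_compM (M : Matrix (Fin n) (Fin n) ℂ) {G : FormalMap n}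
    (hG : ∀ i, constantCoeff (G i) = 0) : compM M.toFormalMap G = fun i => ∑ j, M i j • G j := by
  have hG' := hasSubst_of_constantCoeff_zero hG
  ext i : 1
  simp only [compM_eq_subst _ hG, toFormalMap, ← smul_eq_C_mul, ← coe_substAlgHom hG', map_sum,
    map_smul, substAlgHom_X hG']

theorem toFormalMap_compM_toFormalMap (M N : Matrix (Fin n) (Fin n) ℂ) :
    compM M.toFormalMap N.toFormalMap = (M * N).toFormalMap := by
  rw [toFormalMap_compM M N.constantCoeff_toFormalMap]
  ext i : 1
  simp only [toFormalMap, Matrix.mul_apply, map_sum, map_mul, Finset.sum_mul, Finset.smul_sum,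
    smul_eq_C_mul, mul_assoc]
  exact Finset.sum_comm

theorem toFormalMap_compM_smul_sum {ι : Type*} (M : Matrix (Fin n) (Fin n) ℂ) (c : ℂ)
    (s : Finset ι) {G : ι → FormalMap n} (hG : ∀ m, ∀ i, constantCoeff (G m i) = 0) :
    compM M.toFormalMap (c • ∑ m ∈ s, G m) = c • ∑ m ∈ s, compM M.toFormalMap (G m) := by
  simp only [M.toFormalMap_compM (constantCoeff_smul_sum c s hG), M.toFormalMap_compM (hG _)]
  ext i : 1
  simp only [Pi.smul_apply, Finset.sum_apply, Finset.smul_sum, smul_comm (M _ _) c]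
  exact Finset.sum_comm

end Matrix

section FormalMap

open MvPowerSeries

variable {n : ℕ}

theorem linMap_eq_toFormalMap (F : FormalMap n) : linMap F = (linMatrix F).toFormalMap :=
  rfl

/-- `L(F)^(k-1)` stands for `L(F)⁻¹`, which it is once `F^k = id`. -/
def cartanAverage (F : FormalMap n) (k : ℕ) : FormalMap n :=
  (k : ℂ)⁻¹ • ∑ m ∈ Finset.range k, compM ((linMatrix F ^ (k - 1)) ^ m).toFormalMap (iterM F m)

theorem constantCoeff_cartanAverage {F : FormalMap n} (hF : ∀ i, constantCoeff (F i) = 0)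
    (k : ℕ) (i : Fin n) : constantCoeff (cartanAverage F k i) = 0 :=
  constantCoeff_smul_sum _ _
    (fun _ => constantCoeff_compM (Matrix.constantCoeff_toFormalMap _) (constantCoeff_iterM hF _)) i

theorem linMatrix_cartanAverage {F : FormalMap n} (hF : ∀ i, constantCoeff (F i) = 0) {k : ℕ}
    (hk : 0 < k) (hA : linMatrix F ^ k = 1) : linMatrix (cartanAverage F k) = 1 := by
  have hterm : ∀ m ∈ Finset.range k,
      linMatrix (compM ((linMatrix F ^ (k - 1)) ^ m).toFormalMap (iterM F m)) = 1 := by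
    intro m _
    rw [linMatrix_compM _ (constantCoeff_iterM hF m), Matrix.linMatrix_toFormalMap,
      linMatrix_iterM hF, ← (Commute.self_pow _ (k - 1)).symm.mul_pow, pow_sub_one_mul hk.ne', hA,
      one_pow]
  rw [cartanAverage, linMatrix_smul_sum, Finset.sum_congr rfl hterm, Finset.sum_const,
    Finset.card_range, ← Nat.cast_smul_eq_nsmul ℂ, smul_smul,
    inv_mul_cancel₀ (Nat.cast_ne_zero.mpr hk.ne'), one_smul]

theorem cartanAverage_compM {F : FormalMap n} (hF : ∀ i, constantCoeff (F i) = 0) {k : ℕ}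
    (hk : 0 < k) (hFk : iterM F k = idM n) :
    compM (cartanAverage F k) F = compM (linMatrix F).toFormalMap (cartanAverage F k) := by
  set A := linMatrix F
  have hA : A ^ k = 1 := by rw [← linMatrix_iterM hF, hFk, linMatrix_idM]
  have hAB : A * A ^ (k - 1) = 1 := by rw [mul_pow_sub_one hk.ne', hA]
  have hBk : (A ^ (k - 1)) ^ k = 1 := by rw [← pow_mul, mul_comm, pow_mul, hA, one_pow]
  let f : ℕ → FormalMap n := fun m => compM (A * (A ^ (k - 1)) ^ m).toFormalMap (iterM F m)
  have hf : f k = f 0 := by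
    simp only [f, hFk, hBk, pow_zero]
    rfl
  have hshift : ∀ m, f (m + 1) = compM ((A ^ (k - 1)) ^ m).toFormalMap (iterM F (m + 1)) := by
    intro m
    simp only [f, pow_succ', ← mul_assoc, hAB, one_mul]
  rw [cartanAverage, smul_sum_compM _ _ _ hF, Matrix.toFormalMap_compM_smul_sum _ _ _
    fun _ => constantCoeff_compM (Matrix.constantCoeff_toFormalMap _) (constantCoeff_iterM hF _)]
  congr 1
  calc _ = ∑ m ∈ Finset.range k, f (m + 1) := Finset.sum_congr rfl fun m _ => by
        rw [hshift, compM_assoc _ (constantCoeff_iterM hF m) hF, ← iterM_succ' hF]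
    _ = ∑ m ∈ Finset.range k, f m := Finset.sum_range_succ_eq_sum_range f hf
    _ = _ := Finset.sum_congr rfl fun m _ => by
        rw [← compM_assoc _ (Matrix.constantCoeff_toFormalMap _) (constantCoeff_iterM hF m),
          Matrix.toFormalMap_compM_toFormalMap]

theorem two_le_order_sub_X {H : FormalMap n} (hH : ∀ i, constantCoeff (H i) = 0)
    (hlin : linMatrix H = 1) (i : Fin n) : 2 ≤ (H i - X i).order := by
  refine le_order fun d hd => ?_
  have hd1 : d.degree ≤ 1 := Nat.le_of_lt_succ (by exact_mod_cast hd)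
  rcases hd1.lt_or_eq with hd0 | hd1
  · obtain rfl := (Finsupp.degree_eq_zero_iff d).mp (Nat.lt_one_iff.mp hd0)
    simp [hH]
  · obtain ⟨j, rfl⟩ : d ∈ Set.range fun j => Finsupp.single j 1 := by
      rw [Finsupp.range_single_one]; exact hd1
    have hij : coeff (Finsupp.single j 1) (H i) = (1 : Matrix (Fin n) (Fin n) ℂ) i j :=
      congrFun (congrFun hlin i) j
    simp [hij, coeff_X, Matrix.one_apply, Finsupp.single_left_inj one_ne_zero, eq_comm]

theorem exists_isFixedPt_of_contracting {step : FormalMap n → FormalMap n}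
    (step_origin : ∀ K : FormalMap n, (∀ i, constantCoeff (K i) = 0) →
      ∀ i, constantCoeff (step K i) = 0)
    (step_contracts : ∀ K K' : FormalMap n, (∀ i, constantCoeff (K i) = 0) →
      (∀ i, constantCoeff (K' i) = 0) → ∀ D : ℕ∞, (∀ i, D ≤ (K i - K' i).order) →
      ∀ i, D + 1 ≤ (step K i - step K' i).order) :
    ∃ K : FormalMap n, (∀ i, constantCoeff (K i) = 0) ∧ Function.IsFixedPt step K := by
  obtain ⟨seq, seq_zero, seq_succ⟩ : ∃ seq : ℕ → FormalMap n,
      seq 0 = idM n ∧ ∀ s, seq (s + 1) = step (seq s) :=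
    ⟨fun s => step^[s] (idM n), rfl, fun s => Function.iterate_succ_apply' ..⟩
  have seq_origin : ∀ s i, constantCoeff (seq s i) = 0 := by
    intro s
    induction s with
    | zero => rw [seq_zero]; exact constantCoeff_X
    | succ s ih => rw [seq_succ]; exact step_origin _ ih
  have seq_cauchy : ∀ i, ∀ s : ℕ, (s : ℕ∞) ≤ (seq (s + 1) i - seq s i).order := by
    intro i s
    induction s generalizing i with
    | zero => simp
    | succ s ih =>
      simpa only [← seq_succ, Nat.cast_succ] using
        step_contracts _ _ (seq_origin (s + 1)) (seq_origin s) s ih i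
  choose K hK using fun i => exists_natCast_le_order_sub (f := (seq · i)) (seq_cauchy i)
  have hK0 : ∀ i, constantCoeff (K i) = 0 := fun i => by
    have := one_le_order_iff_constCoeff_eq_zero.mp (by exact_mod_cast hK i 1)
    rwa [map_sub, seq_origin, sub_zero] at this
  refine ⟨K, hK0, funext fun i => (sub_eq_zero.mp ?_).symm⟩
  refine eq_zero_of_forall_natCast_le_order fun s => ?_
  rw [← sub_add_sub_cancel (K i) (seq (s + 1) i)]
  refine le_trans (le_min ?_ ?_) min_order_le_add
  · exact (Nat.cast_le.mpr s.le_succ).trans (hK i (s + 1))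
  · rw [seq_succ, order_sub_comm]
    exact le_self_add.trans (step_contracts _ _ hK0 (seq_origin s) s (fun j => hK j s) i)

theorem exists_compM_eq_idM {H : FormalMap n} (hH : ∀ i, constantCoeff (H i) = 0)
    (hlin : linMatrix H = 1) :
    ∃ K : FormalMap n, (∀ i, constantCoeff (K i) = 0) ∧ compM H K = idM n := by
  obtain ⟨K, hK0, hfix⟩ := exists_isFixedPt_of_contracting
    (step := fun K i => X i - subst K (H i - X i))
    (fun K hK i => by
      rw [map_sub, constantCoeff_X, constantCoeff_subst_eq_zero
        (hasSubst_of_constantCoeff_zero hK) hK (by simp [hH]), sub_zero])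
    (fun K K' hK hK' D hKK' i => by
      rw [sub_sub_sub_cancel_left]
      exact le_order_subst_sub_subst hK' hK (fun j => order_sub_comm (K j) _ ▸ hKK' j)
        (two_le_order_sub_X hH hlin i))
  refine ⟨K, hK0, funext fun i => ?_⟩
  have hKi : K i + subst K (H i - X i) = X i := eq_sub_iff_add_eq.mp (congrFun hfix i).symm
  rw [compM_eq_subst H hK0]
  change subst K (H i) = X i
  rw [← add_sub_cancel (X i) (H i), subst_add (hasSubst_of_constantCoeff_zero hK0),
    subst_X (hasSubst_of_constantCoeff_zero hK0), hKi]

theorem exists_compM_inverse {H : FormalMap n} (hH : ∀ i, constantCoeff (H i) = 0)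
    (hlin : linMatrix H = 1) :
    ∃ K : FormalMap n, (∀ i, constantCoeff (K i) = 0) ∧ linMatrix K = 1 ∧
      compM H K = idM n ∧ compM K H = idM n := by
  obtain ⟨K, hK, hHK⟩ := exists_compM_eq_idM hH hlin
  have hKlin : linMatrix K = 1 := by
    have := linMatrix_compM H hK
    rwa [hHK, linMatrix_idM, hlin, one_mul, eq_comm] at this
  obtain ⟨K', hK', hKK'⟩ := exists_compM_eq_idM hK hKlin
  have hHK' : H = K' := calc
    H = compM H (compM K K') := by rw [hKK', compM_idM]
    _ = compM (compM H K) K' := (compM_assoc H hK hK').symm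
    _ = K' := by rw [hHK, idM_compM hK']
  exact ⟨K, hK, hKlin, hHK, hHK' ▸ hKK'⟩

end FormalMap

/-- Every element of finite order in the group of formally invertible power series maps of
ℂⁿ without constant term is formally conjugate, by a map tangent to the identity, to its
linear part: there is H with L(H) = id and F ∘ H = H ∘ L(F). -/
theorem finite_order_formally_linearizable {n : ℕ} (k : ℕ) (hk : 0 < k)
    (F : FormalMap n)
    (hF0 : ∀ i, MvPowerSeries.constantCoeff (F i) = 0)
    (hFk : iterM F k = idM n) :
    ∃ H : FormalMap n,
      (∀ i, MvPowerSeries.constantCoeff (H i) = 0) ∧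
      linMap H = idM n ∧
      compM F H = compM H (linMap F) := by
  have hA : linMatrix F ^ k = 1 := by rw [← linMatrix_iterM hF0, hFk, linMatrix_idM]
  set H := cartanAverage F k
  have hH0 := constantCoeff_cartanAverage hF0 k
  obtain ⟨K, hK0, hKlin, hHK, hKH⟩ := exists_compM_inverse hH0 (linMatrix_cartanAverage hF0 hk hA)
  refine ⟨K, hK0, by rw [linMap_eq_toFormalMap, hKlin, Matrix.toFormalMap_one], ?_⟩
  set L := (linMatrix F).toFormalMap
  rw [linMap_eq_toFormalMap]
  calc compM F K = compM K (compM (compM H F) K) := by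
        rw [compM_assoc H hF0 hK0, ← compM_assoc K hH0 (constantCoeff_compM hF0 hK0), hKH,
          idM_compM (constantCoeff_compM hF0 hK0)]
    _ = compM K (compM L (compM H K)) := by
        rw [cartanAverage_compM hF0 hk hFk, compM_assoc L hH0 hK0]
    _ = compM K L := by rw [hHK, compM_idM]

end
end

section
/- Every formal power series map h(z) of ℂ reversing f_k(z) = z/(1−kz^k)^{1/k} has finite compositional order at most 2k. -/
noncomputable section

/-!
Put `ζ = z⁻ᵏ`. Then `f_k` acts as the translation `ζ ↦ ζ - k`, and `f_k ∘ h ∘ f_k = h` says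
`h⁻ᵏ ∘ f_k = h⁻ᵏ + k`, so `h⁻ᵏ + z⁻ᵏ` is `f_k`-invariant. Writing `h = z u`, this is the power
series `B = u⁻ᵏ + 1` with `(B ∘ f_k) (1 - k zᵏ) = B`. If `B - ν zᵏ` (with `ν` the `zᵏ`-coefficient
of `B`) had a lowest-order term `c zⁿ`, comparing `zᵏ`-coefficients would force `n = k`; so
`B = ν zᵏ`. Thus `h⁻ᵏ = ν - z⁻ᵏ`: `h` acts on `ζ` as the involution `ζ ↦ ν - ζ`, whence
`(h ∘ h)ᵏ = zᵏ`, `h ∘ h = c z` with `cᵏ = 1`, and `h^{∘2k} = id`.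
-/

open PowerSeries Finset

namespace PowerSeries

theorem coeff_pow_eq_zero_of_lt {R : Type*} [CommSemiring R] {g : R⟦X⟧}
    (hg : constantCoeff g = 0) {n j : ℕ} (h : n < j) : coeff n (g ^ j) = 0 :=
  coeff_of_lt_order n <| (Nat.cast_lt.2 h).trans_le (le_order_pow_of_constantCoeff_eq_zero j hg)

theorem isUnit_geom_sum₂ {K : Type*} [Field K] {a b : K⟦X⟧} {k : ℕ} (hk : (k : K) ≠ 0)
    (hab : constantCoeff a = constantCoeff b) (ha : constantCoeff a ≠ 0) :
    IsUnit (∑ i ∈ range k, a ^ i * b ^ (k - 1 - i)) := by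
  have hterm : ∀ i ∈ range k, constantCoeff (a ^ i * b ^ (k - 1 - i)) =
      constantCoeff a ^ (k - 1) := fun i hi => by
    rw [map_mul, map_pow, map_pow, ← hab, ← pow_add, Nat.add_sub_cancel' (by simp at hi; omega)]
  have hsum : constantCoeff (∑ i ∈ range k, a ^ i * b ^ (k - 1 - i)) =
      k * constantCoeff a ^ (k - 1) := by
    rw [map_sum, sum_congr rfl hterm, sum_const, card_range, nsmul_eq_mul]
  rw [isUnit_iff_constantCoeff, hsum, isUnit_iff_ne_zero]
  exact mul_ne_zero hk (pow_ne_zero _ ha)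

theorem eq_of_pow_eq_pow_of_constantCoeff_eq {K : Type*} [Field K] {a b : K⟦X⟧} {k : ℕ}
    (hk : (k : K) ≠ 0) (hab : constantCoeff a = constantCoeff b) (ha : constantCoeff a ≠ 0)
    (h : a ^ k = b ^ k) : a = b := by
  rw [← sub_eq_zero, ← (isUnit_geom_sum₂ hk hab ha).mul_right_eq_zero, geom_sum₂_mul, h,
    sub_self]

theorem X_pow_dvd_sub_of_X_pow_dvd_pow_sub_pow {K : Type*} [Field K] {a b : K⟦X⟧} {k m : ℕ}
    (hk : (k : K) ≠ 0) (hab : constantCoeff a = constantCoeff b) (ha : constantCoeff a ≠ 0)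
    (h : X ^ m ∣ a ^ k - b ^ k) : X ^ m ∣ a - b := by
  rwa [← geom_sum₂_mul, (isUnit_geom_sum₂ hk hab ha).dvd_mul_left] at h

theorem coeff_eq_of_X_pow_dvd_sub {R : Type*} [Ring R] {a b : R⟦X⟧} {m n : ℕ}
    (h : X ^ m ∣ a - b) (hn : n < m) : coeff n a = coeff n b := by
  rw [← sub_eq_zero, ← map_sub]
  exact X_pow_dvd_iff.1 h n hn

theorem X_pow_succ_dvd_pow_sub_one_sub_C_mul_X_pow {R : Type*} [CommRing R] {w : R⟦X⟧}
    {k : ℕ} (hk : 1 ≤ k) (hw : X ^ (k + 1) ∣ w - (1 - X ^ k)) (n : ℕ) :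
    X ^ (k + 1) ∣ w ^ n - (1 - C (n : R) * X ^ k) := by
  induction n with
  | zero => simp
  | succ n ih =>
    have hX : (X : R⟦X⟧) ^ (k + 1) ∣ C (n : R) * X ^ (2 * k) :=
      (pow_dvd_pow X (by omega)).mul_left _
    have := dvd_add (dvd_add (ih.mul_left w) (hw.mul_right (1 - C (n : R) * X ^ k))) hX
    convert this using 1
    simp only [Nat.cast_succ, map_add, map_one]
    ring

theorem coeff_mul_one_sub_C_mul_X_pow {R : Type*} [CommRing R] (D : R⟦X⟧) (a : R) (k : ℕ) :
    coeff k (D * (1 - C a * X ^ k)) = coeff k D - a * coeff 0 D := by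
  rw [mul_sub, mul_one, mul_left_comm, map_sub, coeff_C_mul, coeff_mul_X_pow', if_pos le_rfl,
    Nat.sub_self]

end PowerSeries

theorem compP_eq_subst (f : ℂ⟦X⟧) {g : ℂ⟦X⟧} (hg : constantCoeff g = 0) :
    compP f g = f.subst g := by
  ext n
  rw [compP, coeff_mk, coeff_subst' (HasSubst.of_constantCoeff_zero' hg),
    finsum_eq_sum_of_support_subset _ (s := Finset.range (n + 1))]
  · simp only [smul_eq_mul]
  · intro j hj
    by_contra hjn
    simp only [Finset.coe_range, Set.mem_Iio, not_lt] at hjn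
    exact hj (by simp [coeff_pow_eq_zero_of_lt hg hjn])

theorem constantCoeff_compP (f g : ℂ⟦X⟧) :
    constantCoeff (compP f g) = constantCoeff f := by
  rw [← coeff_zero_eq_constantCoeff_apply, compP, coeff_mk]
  simp

section compP
variable {g : ℂ⟦X⟧} (hg : constantCoeff g = 0)
include hg

theorem compP_add (a b : ℂ⟦X⟧) : compP (a + b) g = compP a g + compP b g := by
  simp only [compP_eq_subst _ hg, subst_add (HasSubst.of_constantCoeff_zero' hg)]

theorem compP_sub (a b : ℂ⟦X⟧) : compP (a - b) g = compP a g - compP b g := by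
  simp only [compP_eq_subst _ hg, subst_sub (HasSubst.of_constantCoeff_zero' hg)]

theorem compP_mul (a b : ℂ⟦X⟧) : compP (a * b) g = compP a g * compP b g := by
  simp only [compP_eq_subst _ hg, subst_mul (HasSubst.of_constantCoeff_zero' hg)]

theorem compP_pow (a : ℂ⟦X⟧) (n : ℕ) : compP (a ^ n) g = compP a g ^ n := by
  simp only [compP_eq_subst _ hg, subst_pow (HasSubst.of_constantCoeff_zero' hg)]

theorem compP_C (r : ℂ) : compP (C r) g = C r := by
  rw [compP_eq_subst _ hg, subst_C]; rfl

theorem compP_one : compP 1 g = 1 := by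
  simpa using compP_C hg 1

theorem compP_X : compP X g = g := by
  rw [compP_eq_subst _ hg, subst_X (HasSubst.of_constantCoeff_zero' hg)]

theorem compP_assoc {b : ℂ⟦X⟧} (hb : constantCoeff b = 0) (a : ℂ⟦X⟧) :
    compP (compP a b) g = compP a (compP b g) := by
  have hbg : constantCoeff (compP b g) = 0 := by rwa [constantCoeff_compP]
  rw [compP_eq_subst _ hg, compP_eq_subst _ hb, compP_eq_subst _ hbg, compP_eq_subst _ hg,
    subst_comp_subst_apply (HasSubst.of_constantCoeff_zero' hb)
      (HasSubst.of_constantCoeff_zero' hg)]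

theorem compP_one_sub_C_mul (a : ℂ) (p : ℂ⟦X⟧) :
    compP (1 - C a * p) g = 1 - C a * compP p g := by
  rw [compP_sub hg, compP_one hg, compP_mul hg, compP_C hg]

end compP

theorem compP_X_right (f : ℂ⟦X⟧) : compP f X = f := by
  rw [compP_eq_subst _ constantCoeff_X, X_subst]

theorem compP_inv {g u : ℂ⟦X⟧} (hg : constantCoeff g = 0) (hu : constantCoeff u ≠ 0) :
    compP u⁻¹ g = (compP u g)⁻¹ := by
  rw [PowerSeries.eq_inv_iff_mul_eq_one (by rwa [constantCoeff_compP]), ← compP_mul hg,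
    PowerSeries.inv_mul_cancel u hu, compP_one hg]

theorem X_pow_dvd_compP_sub_compP (D : ℂ⟦X⟧) {f g : ℂ⟦X⟧} {m : ℕ} (h : X ^ m ∣ f - g) :
    X ^ m ∣ compP D f - compP D g := by
  refine X_pow_dvd_iff.2 fun n hn => ?_
  rw [map_sub, sub_eq_zero, compP, compP, coeff_mk, coeff_mk]
  refine sum_congr rfl fun j _ => ?_
  rw [coeff_eq_of_X_pow_dvd_sub (h.trans (sub_dvd_pow_sub_pow f g j)) hn]

section StandardReversible

variable {k : ℕ} {w : ℂ⟦X⟧} (hk : 1 ≤ k) (hw0 : constantCoeff w = 1)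
  (hwk : w ^ k = 1 - C (k : ℂ) * X ^ k)

include hk hw0 hwk in
theorem X_pow_succ_dvd_sub_one_sub_X_pow : X ^ (k + 1) ∣ w - (1 - X ^ k) := by
  have hk' : (k : ℂ) ≠ 0 := Nat.cast_ne_zero.2 (by omega)
  refine X_pow_dvd_sub_of_X_pow_dvd_pow_sub_pow hk' ?_ (by simp [hw0]) ?_
  · simp [hw0, zero_pow (by omega : k ≠ 0)]
  · rw [hwk, ← neg_sub, dvd_neg]
    exact X_pow_succ_dvd_pow_sub_one_sub_C_mul_X_pow hk (by simp) k

include hk hw0 hwk in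
theorem X_pow_succ_dvd_X_mul_inv_sub_X : X ^ (k + 1) ∣ X * w⁻¹ - X := by
  have hw : w * w⁻¹ = 1 := PowerSeries.mul_inv_cancel w (by simp [hw0])
  have hXk : X ^ k ∣ 1 - w := by
    have := dvd_sub (dvd_refl (X ^ k))
      ((pow_dvd_pow X k.le_succ).trans (X_pow_succ_dvd_sub_one_sub_X_pow hk hw0 hwk))
    rwa [sub_sub_eq_add_sub, add_sub_cancel] at this
  have : X * w⁻¹ - X = X * (w⁻¹ * (1 - w)) := by linear_combination X * hw
  rw [this, pow_succ']
  exact mul_dvd_mul_left X (hXk.mul_left w⁻¹)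

include hk hw0 hwk in
theorem coeff_compP_X_mul_inv (D : ℂ⟦X⟧) : coeff k (compP D (X * w⁻¹)) = coeff k D := by
  rw [coeff_eq_of_X_pow_dvd_sub (X_pow_dvd_compP_sub_compP D
    (X_pow_succ_dvd_X_mul_inv_sub_X hk hw0 hwk)) k.lt_succ_self, compP_X_right]

include hk hw0 hwk in
theorem coeff_pow_mul (n : ℕ) (D : ℂ⟦X⟧) :
    coeff k (w ^ n * D) = coeff k D - n * coeff 0 D := by
  rw [← coeff_mul_one_sub_C_mul_X_pow, mul_comm D]
  refine coeff_eq_of_X_pow_dvd_sub ?_ k.lt_succ_self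
  rw [← sub_mul]
  exact (X_pow_succ_dvd_pow_sub_one_sub_C_mul_X_pow hk
    (X_pow_succ_dvd_sub_one_sub_X_pow hk hw0 hwk) n).mul_right D

include hw0 hwk in
theorem X_mul_inv_pow_mul_one_sub : (X * w⁻¹) ^ k * (1 - C (k : ℂ) * X ^ k) = X ^ k := by
  rw [mul_pow, ← hwk, mul_assoc, ← mul_pow, PowerSeries.inv_mul_cancel _ (by simp [hw0]),
    one_pow, mul_one]

include hk hw0 hwk in
theorem eq_of_compP_mul_one_sub_eq_pow_mul {n : ℕ} {D : ℂ⟦X⟧} (hD : constantCoeff D ≠ 0)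
    (h : compP D (X * w⁻¹) * (1 - C (k : ℂ) * X ^ k) = w ^ n * D) : n = k := by
  have hcoeff := congrArg (coeff k) h
  simp only [coeff_mul_one_sub_C_mul_X_pow, coeff_compP_X_mul_inv hk hw0 hwk,
    coeff_pow_mul hk hw0 hwk, coeff_zero_eq_constantCoeff_apply, constantCoeff_compP] at hcoeff
  have : (n : ℂ) = k := mul_right_cancel₀ hD (by linear_combination hcoeff)
  exact_mod_cast this

include hk hw0 hwk in
theorem eq_C_mul_X_pow_of_compP_mul_one_sub_eq {B : ℂ⟦X⟧}
    (hB : compP B (X * w⁻¹) * (1 - C (k : ℂ) * X ^ k) = B) : B = C (coeff k B) * X ^ k := by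
  have hf0 : constantCoeff (X * w⁻¹) = 0 := by simp
  set B' := B - C (coeff k B) * X ^ k with hB'
  have hB'inv : compP B' (X * w⁻¹) * (1 - C (k : ℂ) * X ^ k) = B' := by
    rw [hB', compP_sub hf0, compP_mul hf0, compP_C hf0, compP_pow hf0, compP_X hf0]
    linear_combination hB - C (coeff k B) * X_mul_inv_pow_mul_one_sub hw0 hwk
  have hB'k : coeff k B' = 0 := by simp [hB']
  rw [← sub_eq_zero]
  by_contra hne
  have hD0 : constantCoeff B'.divXPowOrder ≠ 0 := by
    rw [constantCoeff_divXPowOrder]; exact coeff_order hne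
  have hDinv : compP B'.divXPowOrder (X * w⁻¹) * (1 - C (k : ℂ) * X ^ k) =
      w ^ B'.order.toNat * B'.divXPowOrder := by
    have hw : w ^ B'.order.toNat * w⁻¹ ^ B'.order.toNat = 1 := by
      rw [← mul_pow, PowerSeries.mul_inv_cancel _ (by simp [hw0]), one_pow]
    rw [← X_pow_order_mul_divXPowOrder (f := B'), compP_mul hf0, compP_pow hf0, compP_X hf0]
      at hB'inv
    refine mul_left_cancel₀ (pow_ne_zero B'.order.toNat X_ne_zero) ?_
    linear_combination w ^ B'.order.toNat * hB'inv - X ^ B'.order.toNat *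
      compP B'.divXPowOrder (X * w⁻¹) * (1 - C (k : ℂ) * X ^ k) * hw
  have hnk := eq_of_compP_mul_one_sub_eq_pow_mul hk hw0 hwk hD0 hDinv
  rw [constantCoeff_divXPowOrder, hnk, hB'k] at hD0
  exact hD0 rfl

include hw0 hwk in
theorem pow_mul_one_sub_sub_eq_compP_pow {u : ℂ⟦X⟧}
    (hrev : compP (compP (X * w⁻¹) (X * u)) (X * w⁻¹) = X * u) :
    u ^ k * (1 - C (k : ℂ) * X ^ k - C (k : ℂ) * X ^ k * compP (u ^ k) (X * w⁻¹)) =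
      compP (u ^ k) (X * w⁻¹) := by
  have hf0 : constantCoeff (X * w⁻¹) = 0 := by simp
  have hh0 : constantCoeff (X * u) = 0 := by simp
  have hfk := X_mul_inv_pow_mul_one_sub hw0 hwk
  have hfk_h := congrArg (compP · (X * u)) hfk
  rw [compP_mul hh0, compP_one_sub_C_mul hh0, compP_pow hh0 X, compP_X hh0] at hfk_h
  have hrev_pow : (X * u) ^ k * (1 - C (k : ℂ) * compP ((X * u) ^ k) (X * w⁻¹)) =
      compP ((X * u) ^ k) (X * w⁻¹) := by
    have := congrArg (compP · (X * w⁻¹)) hfk_h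
    rwa [compP_mul hf0, compP_pow hh0 (X * w⁻¹), compP_pow hf0 (compP _ _), hrev,
      compP_one_sub_C_mul hf0] at this
  rw [mul_pow X u k, compP_mul hf0, compP_pow hf0, compP_X hf0] at hrev_pow
  set Z := compP (u ^ k) (X * w⁻¹)
  refine mul_left_cancel₀ (pow_ne_zero k X_ne_zero) ?_
  linear_combination (1 - C (k : ℂ) * X ^ k) * hrev_pow + (C (k : ℂ) * X ^ k * u ^ k * Z + Z) * hfk

include hw0 hwk in
theorem compP_inv_pow_add_one_mul_one_sub_eq {u : ℂ⟦X⟧} (hu : constantCoeff u ≠ 0)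
    (hrev : compP (compP (X * w⁻¹) (X * u)) (X * w⁻¹) = X * u) :
    compP ((u ^ k)⁻¹ + 1) (X * w⁻¹) * (1 - C (k : ℂ) * X ^ k) = (u ^ k)⁻¹ + 1 := by
  have hf0 : constantCoeff (X * w⁻¹) = 0 := by simp
  have hA0 : constantCoeff (u ^ k) ≠ 0 := by simpa using pow_ne_zero k hu
  have h := pow_mul_one_sub_sub_eq_compP_pow hw0 hwk hrev
  set A := u ^ k
  set Z := compP A (X * w⁻¹)
  have hA : A * A⁻¹ = 1 := PowerSeries.mul_inv_cancel A hA0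
  have hZ : Z * Z⁻¹ = 1 := PowerSeries.mul_inv_cancel Z (by rwa [constantCoeff_compP])
  rw [compP_add hf0, compP_one hf0, compP_inv hf0 hA0]
  -- `h` divided by `A * Z`
  linear_combination A⁻¹ * Z⁻¹ * h + (C (k : ℂ) * X ^ k - Z⁻¹ * (1 - C (k : ℂ) * X ^ k)) * hA +
    (C (k : ℂ) * X ^ k * A * A⁻¹ + A⁻¹) * hZ

end StandardReversible

theorem compP_self_pow_eq_X_pow {k : ℕ} {u : ℂ⟦X⟧} {ν : ℂ} (hu : constantCoeff u ≠ 0)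
    (hν : (u ^ k)⁻¹ + 1 = C ν * X ^ k) : compP (X * u) (X * u) ^ k = X ^ k := by
  have hh0 : constantCoeff (X * u) = 0 := by simp
  have hA : u ^ k * (u ^ k)⁻¹ = 1 :=
    PowerSeries.mul_inv_cancel _ (by simpa using pow_ne_zero k hu)
  have hAν : u ^ k * (C ν * X ^ k - 1) = 1 := by
    rw [← hν]
    linear_combination hA
  have hcomp := congrArg (compP · (X * u)) hAν
  simp only [compP_mul hh0, compP_sub hh0, compP_C hh0, compP_pow hh0, compP_X hh0,
    compP_one hh0, mul_pow X u k] at hcomp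
  calc compP (X * u) (X * u) ^ k = X ^ k * u ^ k * compP u (X * u) ^ k := by
        rw [compP_mul hh0, compP_X hh0, mul_pow, mul_pow]
    _ = X ^ k := by linear_combination X ^ k * hcomp - X ^ k * compP u (X * u) ^ k * hAν

theorem exists_eq_C_mul_X_of_pow_eq_X_pow {K : Type*} [Field K] {p : K⟦X⟧} {k : ℕ}
    (hk : (k : K) ≠ 0) (hp0 : constantCoeff p = 0) (hp : p ^ k = X ^ k) :
    ∃ c : K, c ^ k = 1 ∧ p = C c * X := by
  obtain ⟨q, rfl⟩ := X_dvd_iff.2 hp0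
  have hqk : q ^ k = 1 :=
    mul_left_cancel₀ (pow_ne_zero k X_ne_zero) (by rw [← mul_pow, hp, mul_one])
  have hc : constantCoeff q ^ k = 1 := by simpa using congrArg constantCoeff hqk
  have hc0 : constantCoeff q ≠ 0 := by
    rintro h
    rw [h, zero_pow fun hk0 => hk (by rw [hk0, Nat.cast_zero])] at hc
    exact zero_ne_one hc
  have hq : q = C (constantCoeff q) := eq_of_pow_eq_pow_of_constantCoeff_eq hk (by simp) hc0
    (by rw [hqk, ← map_pow, hc, map_one])
  exact ⟨constantCoeff q, hc, by rw [mul_comm, ← hq]⟩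

theorem iterP_two_mul {h : ℂ⟦X⟧} {c : ℂ} (hh0 : constantCoeff h = 0)
    (hhh : compP h h = C c * X) (m : ℕ) : iterP h (2 * m) = C (c ^ m) * X := by
  have hconst : ∀ n, constantCoeff (iterP h n) = 0
    | 0 => constantCoeff_X
    | n + 1 => by rw [iterP, constantCoeff_compP, hh0]
  induction m with
  | zero => simp [iterP]
  | succ m ih =>
    rw [mul_add_one, iterP, iterP, ← compP_assoc (hconst _) hh0, hhh, compP_mul (hconst _),
      compP_C (hconst _), compP_X (hconst _), ih, pow_succ', map_mul, mul_assoc]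

/-- Every invertible formal power series h reversing f_k(z) = z/(1-kz^k)^{1/k}
(written X * w⁻¹ with w the k-th root of 1 - k X^k with constant term 1) has finite
compositional order at most 2k: indeed h^{∘(2k)} = id.  The reversal condition
h⁻¹ ∘ f ∘ h = f⁻¹ is encoded equivalently as f ∘ h ∘ f = h. -/
theorem reverser_of_fk_has_finite_order (k : ℕ) (hk : 1 ≤ k) (w h : PowerSeries ℂ)
    (hw0 : PowerSeries.constantCoeff w = 1)
    (hwk : w ^ k = 1 - PowerSeries.C (k : ℂ) * PowerSeries.X ^ k)
    (hh0 : PowerSeries.constantCoeff h = 0)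
    (hh1 : PowerSeries.coeff 1 h ≠ 0)
    (hrev : compP (compP (PowerSeries.X * w⁻¹) h) (PowerSeries.X * w⁻¹) = h) :
    iterP h (2 * k) = PowerSeries.X := by
  obtain ⟨u, rfl⟩ := X_dvd_iff.2 hh0
  have hu : constantCoeff u ≠ 0 := by simpa [coeff_succ_X_mul] using hh1
  have hinv := eq_C_mul_X_pow_of_compP_mul_one_sub_eq hk hw0 hwk
    (compP_inv_pow_add_one_mul_one_sub_eq hw0 hwk hu hrev)
  obtain ⟨c, hc, hcomp⟩ := exists_eq_C_mul_X_of_pow_eq_X_pow (Nat.cast_ne_zero.2 (by omega))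
    (by rw [constantCoeff_compP, hh0]) (compP_self_pow_eq_X_pow hu hinv)
  rw [iterP_two_mul hh0 hcomp, hc, map_one, one_mul]

end
end
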